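/- arXiv:2106.12176 — 2 statements merged into one kernel-verified Lean document; each statement's English description precedes it below -/
import Mathlib

section
/- Let α, β, γ, μ, ν, φ, ψ : ℕ → ℝ be real sequences and let (T_n) be a sequence of real polynomials satisfying T_{n+1}(x) = (α_n x² + β_n x + γ_n)T_n(x) + (μ_n x³ + ν_n x² + φ_n x + ψ_n)T_n′(x) for all n. For each n set m_n = deg T_n, F_n(x) = α_n x² + β_n x + γ_n and G_n(x) = (α_n + m_nμ_n)x³ + (β_n + m_nν_n)x² + (γ_n + m_nφ_n)x + m_nψ_n. Fix n₀ ∈ ℕ and suppose that for every n ≥ n₀: the leading coefficients of F_n and G_n are positive, deg F_n ≤ deg G_n ≤ deg F_n + 1, deg F_n ≤ 1, and β_nγ_nφ_n − γ_n²ν_n − β_n²ψ_n ≥ 0. If T_{n₀} is real-rooted, then T_n is real-rooted for all n ≥ n₀. -/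
open Polynomial

/-- A real polynomial is real-rooted if it is identically zero or
all of its complex roots are real. -/
def RealRooted (f : Polynomial ℝ) : Prop :=
  f = 0 ∨ ∀ z : ℂ, aeval z f = 0 → z.im = 0

/-- `Fpoly a b c = a x² + b x + c`. -/
noncomputable def Fpoly (a b c : ℝ) : Polynomial ℝ := C a * X ^ 2 + C b * X + C c

/-- `Gpoly a b c d = a x³ + b x² + c x + d`. -/
noncomputable def Gpoly (a b c d : ℝ) : Polynomial ℝ :=
  C a * X ^ 3 + C b * X ^ 2 + C c * X + C d

/-!
Write `m = deg T_n`, so that `G_n = X F_n + m G₀` with `G₀ = μ x³ + ν x² + φ x + ψ`, and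
`m T_{n+1} = F_n (m T_n - X T_n') + G_n T_n'`. The degree and sign hypotheses force
`F_n = βX + γ` and `G_n = q₂X² + q₁X + q₀`. Suppose `T_{n+1}(z) = 0` with `Im z > 0` and let
`L = T_n'(z) / T_n(z) = ∑ 1 / (z - r)` over the (real) roots of `T_n`. Then
`F(z) (m - z L) + G(z) L = 0`; multiplying by `conj (F(z) L)` and taking imaginary parts gives
`|F(z)|² (-m Im L - Im z |L|²) + Im (G(z) conj F(z)) |L|² = 0`.
The first term is nonnegative by Cauchy–Schwarz, since `Im (1 / (z - r)) = -Im z |1 / (z - r)|²`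
for real `r`. The second is `Im z` times a quantity `K(z)` with
`β K(z) = q₂ (β Re z + γ)² + β² q₂ (Im z)² + (βγq₁ - γ²q₂ - β²q₀)`, and the last bracket is
`m (βγφ - γ²ν - β²ψ) ≥ 0` (it says `G ≤ 0` at the zero of `F`). So both terms vanish: equality in
Cauchy–Schwarz makes `T_n = c (X - t)^m`, whence `m T_{n+1} = (G - t F) T_n'`, and `K(z) = 0`
forces `q₂ = 0` (for `β = 0` the degree bound does), so `G - t F` is a real linear polynomial
vanishing at the nonreal `z`.
-/

open ComplexConjugate Complex

theorem RealRooted.splits {T : ℝ[X]} (hT : RealRooted T) : T.Splits := by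
  rcases hT with rfl | hT
  · exact Splits.zero
  refine Splits.of_splits_map (algebraMap ℝ ℂ) (IsAlgClosed.splits _) fun a ha => ?_
  have ha' : aeval a T = 0 := by
    rw [mem_roots', IsRoot, eval_map_algebraMap] at ha
    exact ha.2
  exact ⟨a.re, Complex.ext (by simp) (by simp [hT a ha'])⟩

theorem RealRooted.aeval_ne_zero {T : ℝ[X]} (hT : RealRooted T) (hT0 : T ≠ 0) {z : ℂ}
    (hz : z.im ≠ 0) : aeval z T ≠ 0 :=
  fun h => hz (hT.resolve_left hT0 z h)

theorem realRooted_of_forall_im_pos {P : ℝ[X]}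
    (hP : ∀ z : ℂ, 0 < z.im → aeval z P = 0 → P = 0) : RealRooted P := by
  refine or_iff_not_imp_left.2 fun hP0 z hz => ?_
  by_contra him
  rcases lt_or_gt_of_ne him with hlt | hgt
  · exact hP0 (hP (conj z) (by simpa using hlt) (by rw [aeval_conj, hz, map_zero]))
  · exact hP0 (hP z hgt hz)

theorem Polynomial.Splits.aeval_derivative_eq_mul_sum {T : ℝ[X]} (hT : T.Splits) {z : ℂ}
    (hz : aeval z T ≠ 0) :
    aeval z (derivative T) = aeval z T * (T.roots.map fun r : ℝ => 1 / (z - r)).sum := by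
  have hTc := hT.map (algebraMap ℝ ℂ)
  rw [← eval_map_algebraMap] at hz ⊢
  rw [← derivative_map, hTc.eval_derivative_eq_eval_mul_sum hz, hT.roots_map, Multiset.map_map,
    eval_map_algebraMap]
  rfl

theorem Multiset.sum_map_normSq_sub (s : Multiset ℂ) (c : ℂ) :
    (s.map fun u => normSq (u - c)).sum =
      (s.map normSq).sum - 2 * (s.sum * conj c).re + s.card * normSq c := by
  induction s using Multiset.induction_on with
  | empty => simp
  | cons a s ih =>
    rw [Multiset.map_cons, Multiset.sum_cons, ih]
    simp only [Multiset.map_cons, Multiset.sum_cons, Multiset.card_cons, normSq_sub, add_mul,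
      add_re]
    push_cast
    ring

theorem im_mul_normSq_one_div_sub_ofReal (z : ℂ) (r : ℝ) :
    z.im * normSq (1 / (z - r)) = -(1 / (z - r)).im := by
  simp only [one_div, inv_im, map_inv₀, sub_im, ofReal_im, sub_zero]
  ring

section Laguerre

variable (s : Multiset ℝ) {z : ℂ}

theorem im_mul_sum_normSq_one_div_sub :
    z.im * (s.map fun r : ℝ => normSq (1 / (z - r))).sum =
      -(s.map fun r : ℝ => 1 / (z - r)).sum.im := by
  induction s using Multiset.induction_on with
  | empty => simp
  | cons a s ih =>
    simp only [Multiset.map_cons, Multiset.sum_cons, mul_add, ih, add_im,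
      im_mul_normSq_one_div_sub_ofReal]
    ring

theorem card_mul_im_mul_sum_normSq_sub_eq (hs : s ≠ 0) (L : ℂ)
    (hL : (s.map fun r : ℝ => 1 / (z - r)).sum = L) :
    s.card * z.im * (s.map fun r : ℝ => normSq (1 / (z - r) - L / s.card)).sum =
      -(s.card * L.im) - z.im * normSq L := by
  have hm : (s.card : ℝ) ≠ 0 := by simpa using hs
  have key := Multiset.sum_map_normSq_sub (s.map fun r : ℝ => 1 / (z - r)) (L / s.card)
  simp only [Multiset.map_map, Function.comp_def, Multiset.card_map, hL] at key
  have hnorm := im_mul_sum_normSq_one_div_sub s (z := z)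
  have hre : (L * conj (L / s.card)).re = normSq L / s.card := by
    rw [map_div₀, map_natCast, ← mul_div_assoc, mul_conj, ← ofReal_natCast, ← ofReal_div,
      ofReal_re]
  rw [hL] at hnorm
  rw [key, hre, normSq_div, normSq_natCast]
  field_simp
  linear_combination (s.card : ℝ) * hnorm

theorem im_mul_normSq_sum_one_div_sub_le (hz : 0 < z.im) :
    z.im * normSq (s.map fun r : ℝ => 1 / (z - r)).sum ≤
      -(s.card * (s.map fun r : ℝ => 1 / (z - r)).sum.im) := by
  rcases eq_or_ne s 0 with rfl | hs
  · simp
  set L := (s.map fun r : ℝ => 1 / (z - r)).sum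
  have hsum := card_mul_im_mul_sum_normSq_sub_eq s hs L rfl
  have : 0 ≤ (s.map fun r : ℝ => normSq (1 / (z - r) - L / s.card)).sum :=
    Multiset.sum_nonneg fun _ hx => by
      obtain ⟨r, -, rfl⟩ := Multiset.mem_map.1 hx
      exact normSq_nonneg _
  nlinarith [mul_nonneg (mul_nonneg (Nat.cast_nonneg s.card) hz.le) this]

theorem exists_eq_replicate_of_im_mul_normSq_sum_one_div_sub_eq (hz : 0 < z.im)
    (h : z.im * normSq (s.map fun r : ℝ => 1 / (z - r)).sum =
      -(s.card * (s.map fun r : ℝ => 1 / (z - r)).sum.im)) :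
    ∃ t, s = Multiset.replicate s.card t := by
  rcases eq_or_ne s 0 with rfl | hs
  · exact ⟨0, rfl⟩
  set c := (s.map fun r : ℝ => 1 / (z - r)).sum / s.card
  have hsum := card_mul_im_mul_sum_normSq_sub_eq s (z := z) hs _ rfl
  have hpos : 0 < (s.card : ℝ) * z.im := mul_pos (by simpa [pos_iff_ne_zero] using hs) hz
  have hzero : (s.map fun r : ℝ => normSq (1 / (z - r) - c)).sum = 0 :=
    (mul_eq_zero.1 (hsum.trans (by linarith))).resolve_left hpos.ne'
  refine ⟨(z - c⁻¹).re, Multiset.eq_replicate.2 ⟨rfl, fun r hr => ?_⟩⟩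
  have hle : normSq (1 / (z - r) - c) ≤ 0 := hzero ▸ Multiset.single_le_sum (fun x hx => by
      obtain ⟨r, -, rfl⟩ := Multiset.mem_map.1 hx
      exact normSq_nonneg _) _ (Multiset.mem_map_of_mem (fun r : ℝ => normSq (1 / (z - r) - c)) hr)
  have hrc : 1 / (z - r) = c :=
    sub_eq_zero.1 (normSq_eq_zero.1 (le_antisymm hle (normSq_nonneg _)))
  rw [← hrc, one_div, inv_inv, sub_sub_cancel, ofReal_re]

end Laguerre

theorem Polynomial.Splits.exists_eq_C_mul_X_sub_C_pow {T : ℝ[X]} (hT : T.Splits) {z : ℂ}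
    (hz : 0 < z.im) (h : z.im * normSq (T.roots.map fun r : ℝ => 1 / (z - r)).sum =
      -(T.natDegree * (T.roots.map fun r : ℝ => 1 / (z - r)).sum.im)) :
    ∃ t, T = C T.leadingCoeff * (X - C t) ^ T.natDegree := by
  rw [hT.natDegree_eq_card_roots] at h
  obtain ⟨t, ht⟩ := exists_eq_replicate_of_im_mul_normSq_sum_one_div_sub_eq T.roots hz h
  refine ⟨t, ?_⟩
  conv_lhs => rw [hT.eq_prod_roots, ht, Multiset.map_replicate, Multiset.prod_replicate,
    ← hT.natDegree_eq_card_roots]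

theorem linear_eq_zero_of_aeval_eq_zero {a b : ℝ} {z : ℂ} (hz : z.im ≠ 0)
    (h : aeval z (C a * X + C b) = 0) : a = 0 ∧ b = 0 := by
  simp only [map_add, map_mul, aeval_C, aeval_X, coe_algebraMap] at h
  have ha : a * z.im = 0 := by simpa using congrArg Complex.im h
  have ha0 : a = 0 := (mul_eq_zero.1 ha).resolve_right hz
  refine ⟨ha0, ?_⟩
  simpa [ha0] using congrArg Complex.re h

theorem aeval_C_mul_X_add_C_ne_zero {a b : ℝ} (hab : a = 0 → b ≠ 0) {z : ℂ} (hz : z.im ≠ 0) :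
    aeval z (C a * X + C b) ≠ 0 := fun h =>
  hab (linear_eq_zero_of_aeval_eq_zero hz h).1 (linear_eq_zero_of_aeval_eq_zero hz h).2

noncomputable def imPairing (β γ q₂ q₁ q₀ : ℝ) (z : ℂ) : ℝ :=
  β * q₂ * normSq z + 2 * γ * q₂ * z.re + γ * q₁ - β * q₀

section Pairing

variable {β γ q₂ q₁ q₀ : ℝ} {z : ℂ}

theorem im_aeval_mul_conj_aeval (β γ q₂ q₁ q₀ : ℝ) (z : ℂ) :
    (aeval z (C q₂ * X ^ 2 + C q₁ * X + C q₀) * conj (aeval z (C β * X + C γ))).im =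
      z.im * imPairing β γ q₂ q₁ q₀ z := by
  simp only [imPairing, map_add, map_mul, aeval_C, aeval_X, coe_algebraMap, conj_ofReal, mul_im,
    mul_re, add_im, add_re, ofReal_re, ofReal_im, conj_re, conj_im, pow_two, normSq_apply]
  ring

theorem mul_imPairing_eq (β γ q₂ q₁ q₀ : ℝ) (z : ℂ) :
    β * imPairing β γ q₂ q₁ q₀ z =
      q₂ * (β * z.re + γ) ^ 2 + β ^ 2 * q₂ * z.im ^ 2 + (β * γ * q₁ - γ ^ 2 * q₂ - β ^ 2 * q₀) := by
  rw [imPairing, normSq_apply]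
  ring

theorem imPairing_nonneg (hβ : 0 ≤ β) (hγ : β = 0 → 0 < γ) (hq₂ : 0 ≤ q₂)
    (hq₂β : β = 0 → q₂ = 0) (hq₁ : β = 0 → 0 ≤ q₁)
    (hroot : 0 ≤ β * γ * q₁ - γ ^ 2 * q₂ - β ^ 2 * q₀) (z : ℂ) :
    0 ≤ imPairing β γ q₂ q₁ q₀ z := by
  rcases hβ.eq_or_lt with rfl | hβ
  · simp [imPairing, hq₂β rfl, mul_nonneg (hγ rfl).le (hq₁ rfl)]
  refine nonneg_of_mul_nonneg_right ?_ hβ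
  rw [mul_imPairing_eq]
  positivity

theorem eq_zero_of_imPairing_eq_zero (hβ : 0 ≤ β) (hq₂ : 0 ≤ q₂) (hq₂β : β = 0 → q₂ = 0)
    (hroot : 0 ≤ β * γ * q₁ - γ ^ 2 * q₂ - β ^ 2 * q₀) (hz : z.im ≠ 0)
    (h : imPairing β γ q₂ q₁ q₀ z = 0) : q₂ = 0 := by
  rcases hβ.eq_or_lt with rfl | hβ
  · exact hq₂β rfl
  have hsum := mul_imPairing_eq β γ q₂ q₁ q₀ z
  rw [h, mul_zero] at hsum
  have : β ^ 2 * q₂ * z.im ^ 2 = 0 := by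
    nlinarith [mul_nonneg hq₂ (sq_nonneg (β * z.re + γ)), mul_nonneg (mul_nonneg (sq_nonneg β) hq₂)
      (sq_nonneg z.im)]
  simpa [hβ.ne', hz] using this

end Pairing

theorem eq_zero_and_eq_zero_of_mul_sub_add_mul_eq_zero {F G L z : ℂ} {m : ℝ} (hF : F ≠ 0)
    (hL : L ≠ 0) (h : F * (m - z * L) + G * L = 0) (hA : 0 ≤ -(m * L.im) - z.im * normSq L)
    (hB : 0 ≤ (G * conj F).im) :
    -(m * L.im) - z.im * normSq L = 0 ∧ (G * conj F).im = 0 := by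
  have key : (F * (m - z * L) + G * L) * (conj F * conj L) =
      normSq F * (m * conj L - z * normSq L) + G * conj F * normSq L := by
    rw [← mul_conj, ← mul_conj]
    ring
  rw [h, zero_mul] at key
  have hsum : normSq F * (-(m * L.im) - z.im * normSq L) + (G * conj F).im * normSq L = 0 := by
    have him := congrArg Complex.im key
    simp only [zero_im, add_im, mul_im, ofReal_re, ofReal_im, sub_im, sub_re, mul_re, conj_im,
      conj_re] at him ⊢
    linear_combination -him
  have hFpos := normSq_pos.2 hF
  have hLpos := normSq_pos.2 hL
  obtain ⟨hA0, hB0⟩ :=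
    (add_eq_zero_iff_of_nonneg (mul_nonneg hFpos.le hA) (mul_nonneg hB hLpos.le)).1 hsum
  exact ⟨(mul_eq_zero.1 hA0).resolve_left hFpos.ne', (mul_eq_zero.1 hB0).resolve_right hLpos.ne'⟩

theorem aeval_mul_sub_X_mul_derivative_add_mul_derivative (F G T : ℝ[X]) (m : ℝ) {z L : ℂ}
    (hL : aeval z (derivative T) = aeval z T * L) :
    aeval z (F * (C m * T - X * derivative T) + G * derivative T) =
      aeval z T * (aeval z F * (m - z * L) + aeval z G * L) := by
  simp only [map_add, map_mul, map_sub, hL, aeval_C, aeval_X, coe_algebraMap]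
  ring

theorem C_mul_sub_X_mul_derivative_of_eq_pow {T : ℝ[X]} {c t : ℝ} {m : ℕ}
    (hT : T = C c * (X - C t) ^ m) : C (m : ℝ) * T - X * derivative T = -(C t * derivative T) := by
  subst hT
  rcases m with _ | k
  · simp
  rw [derivative_C_mul, derivative_X_sub_C_pow, Nat.add_sub_cancel, pow_succ]
  push_cast
  ring

theorem RealRooted.eq_zero_of_aeval_eq_zero {T : ℝ[X]} (hT : RealRooted T)
    (hm : 0 < T.natDegree) {β γ q₂ q₁ q₀ : ℝ} (hβ : 0 ≤ β) (hγ : β = 0 → 0 < γ) (hq₂ : 0 ≤ q₂)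
    (hq₂β : β = 0 → q₂ = 0) (hq₁ : β = 0 → 0 ≤ q₁)
    (hroot : 0 ≤ β * γ * q₁ - γ ^ 2 * q₂ - β ^ 2 * q₀) {z : ℂ} (hz : 0 < z.im)
    (hP : aeval z ((C β * X + C γ) * (C (T.natDegree : ℝ) * T - X * derivative T) +
      (C q₂ * X ^ 2 + C q₁ * X + C q₀) * derivative T) = 0) :
    (C β * X + C γ) * (C (T.natDegree : ℝ) * T - X * derivative T) +
      (C q₂ * X ^ 2 + C q₁ * X + C q₀) * derivative T = 0 := by
  have hsplit := hT.splits
  have hw := hT.aeval_ne_zero (ne_zero_of_natDegree_gt hm) hz.ne'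
  set L := (T.roots.map fun r : ℝ => 1 / (z - r)).sum
  have hw' := hsplit.aeval_derivative_eq_mul_sum hw
  have hF := aeval_C_mul_X_add_C_ne_zero (fun hβ0 => (hγ hβ0).ne') hz.ne'
  have hscalar : aeval z (C β * X + C γ) * (T.natDegree - z * L) +
      aeval z (C q₂ * X ^ 2 + C q₁ * X + C q₀) * L = 0 := by
    rw [aeval_mul_sub_X_mul_derivative_add_mul_derivative _ _ _ _ hw'] at hP
    exact (mul_eq_zero.1 hP).resolve_left hw
  have hL : L ≠ 0 := by
    rintro hL0
    rw [hL0, mul_zero, sub_zero, mul_zero, add_zero] at hscalar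
    exact mul_ne_zero hF (Nat.cast_ne_zero.2 hm.ne') hscalar
  have hlaguerre := im_mul_normSq_sum_one_div_sub_le T.roots hz
  rw [← hsplit.natDegree_eq_card_roots] at hlaguerre
  have hpairing := imPairing_nonneg hβ hγ hq₂ hq₂β hq₁ hroot z
  rw [← (mul_nonneg_iff_of_pos_left hz), ← im_aeval_mul_conj_aeval] at hpairing
  obtain ⟨hA, hB⟩ := eq_zero_and_eq_zero_of_mul_sub_add_mul_eq_zero hF hL hscalar (by linarith)
    hpairing
  obtain ⟨t, hTt⟩ := hsplit.exists_eq_C_mul_X_sub_C_pow hz (by linarith)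
  rw [im_aeval_mul_conj_aeval] at hB
  have hq₂0 : q₂ = 0 := eq_zero_of_imPairing_eq_zero hβ hq₂ hq₂β hroot hz.ne'
    ((mul_eq_zero.1 hB).resolve_left hz.ne')
  have hPeq : (C β * X + C γ) * (C (T.natDegree : ℝ) * T - X * derivative T) +
      (C q₂ * X ^ 2 + C q₁ * X + C q₀) * derivative T =
      (C (q₁ - t * β) * X + C (q₀ - t * γ)) * derivative T := by
    rw [C_mul_sub_X_mul_derivative_of_eq_pow hTt, hq₂0, C_sub, C_sub, C_mul, C_mul, C_0]
    ring
  rw [hPeq] at hP ⊢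
  rw [map_mul, hw'] at hP
  obtain ⟨h₁, h₀⟩ := linear_eq_zero_of_aeval_eq_zero hz.ne'
    ((mul_eq_zero.1 hP).resolve_right (mul_ne_zero hw hL))
  simp [h₁, h₀]

theorem RealRooted.linear_mul_add_mul_derivative {T G₀ : ℝ[X]} (hT : RealRooted T)
    {β γ q₂ q₁ q₀ : ℝ} (hβ : 0 ≤ β) (hγ : β = 0 → 0 < γ) (hq₂ : 0 ≤ q₂)
    (hq₂β : β = 0 → q₂ = 0) (hq₁ : β = 0 → 0 ≤ q₁)
    (hroot : 0 ≤ β * γ * q₁ - γ ^ 2 * q₂ - β ^ 2 * q₀)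
    (hG : X * (C β * X + C γ) + C (T.natDegree : ℝ) * G₀ = C q₂ * X ^ 2 + C q₁ * X + C q₀) :
    RealRooted ((C β * X + C γ) * T + G₀ * derivative T) := by
  refine realRooted_of_forall_im_pos fun z hz hPz => ?_
  rcases Nat.eq_zero_or_pos T.natDegree with hm | hm
  · rw [derivative_of_natDegree_zero hm, mul_zero, add_zero] at hPz ⊢
    rw [map_mul] at hPz
    obtain rfl : T = 0 := by_contra fun hT0 =>
      mul_ne_zero (aeval_C_mul_X_add_C_ne_zero (fun hβ0 => (hγ hβ0).ne') hz.ne')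
        (hT.aeval_ne_zero hT0 hz.ne') hPz
    exact mul_zero _
  have key : C (T.natDegree : ℝ) * ((C β * X + C γ) * T + G₀ * derivative T) =
      (C β * X + C γ) * (C (T.natDegree : ℝ) * T - X * derivative T) +
        (C q₂ * X ^ 2 + C q₁ * X + C q₀) * derivative T := by
    rw [← hG]
    ring
  have hP := hT.eq_zero_of_aeval_eq_zero hm hβ hγ hq₂ hq₂β hq₁ hroot hz
    (by rw [← key, map_mul, hPz, mul_zero])
  rw [← key] at hP
  exact (mul_eq_zero.1 hP).resolve_left (by simpa using hm.ne')

section Coefficients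

variable (a b c d : ℝ)

@[simp] theorem coeff_Fpoly_zero : (Fpoly a b c).coeff 0 = c := by simp [Fpoly]
@[simp] theorem coeff_Fpoly_one : (Fpoly a b c).coeff 1 = b := by simp [Fpoly]
@[simp] theorem coeff_Fpoly_two : (Fpoly a b c).coeff 2 = a := by simp [Fpoly]
@[simp] theorem coeff_Gpoly_one : (Gpoly a b c d).coeff 1 = c := by simp [Gpoly]
@[simp] theorem coeff_Gpoly_two : (Gpoly a b c d).coeff 2 = b := by simp [Gpoly]
@[simp] theorem coeff_Gpoly_three : (Gpoly a b c d).coeff 3 = a := by simp [Gpoly]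

end Coefficients

theorem coeff_nonneg_of_natDegree_le {p : ℝ[X]} (hp : 0 < p.leadingCoeff) {k : ℕ}
    (hk : p.natDegree ≤ k) : 0 ≤ p.coeff k := by
  rcases hk.eq_or_lt with rfl | hk
  · exact hp.le
  · rw [coeff_eq_zero_of_natDegree_lt hk]

theorem Gpoly_eq_X_mul_Fpoly_add_C_mul_Gpoly (a b c k μ ν φ ψ : ℝ) :
    Gpoly (a + k * μ) (b + k * ν) (c + k * φ) (k * ψ) = X * Fpoly a b c + C k * Gpoly μ ν φ ψ := by
  simp only [Gpoly, Fpoly, C_add, C_mul]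
  ring

theorem RealRooted.Fpoly_mul_add_Gpoly_mul_derivative {T : ℝ[X]} (hT : RealRooted T)
    {α β γ μ ν φ ψ : ℝ} (hFlead : 0 < (Fpoly α β γ).leadingCoeff)
    (hGlead : 0 < (Gpoly (α + T.natDegree * μ) (β + T.natDegree * ν) (γ + T.natDegree * φ)
      (T.natDegree * ψ)).leadingCoeff)
    (hdegGF : (Gpoly (α + T.natDegree * μ) (β + T.natDegree * ν) (γ + T.natDegree * φ)
      (T.natDegree * ψ)).natDegree ≤ (Fpoly α β γ).natDegree + 1)
    (hdegF : (Fpoly α β γ).natDegree ≤ 1) (hineq : 0 ≤ β * γ * φ - γ ^ 2 * ν - β ^ 2 * ψ) :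
    RealRooted (Fpoly α β γ * T + Gpoly μ ν φ ψ * derivative T) := by
  set m := T.natDegree
  set G := Gpoly (α + m * μ) (β + m * ν) (γ + m * φ) (m * ψ) with hG
  have hα : α = 0 := by
    simpa using coeff_eq_zero_of_natDegree_lt (p := Fpoly α β γ) (n := 2) (by omega)
  have hβ : 0 ≤ β := by simpa using coeff_nonneg_of_natDegree_le hFlead hdegF
  have hFdeg : β = 0 → (Fpoly α β γ).natDegree = 0 := fun hβ0 => by
    simp only [hα, hβ0, Fpoly, map_zero, zero_mul, zero_add, natDegree_C]
  have hγ : β = 0 → 0 < γ := fun hβ0 => by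
    rwa [leadingCoeff, hFdeg hβ0, coeff_Fpoly_zero] at hFlead
  have hG₃ : α + m * μ = 0 := by
    simpa [G] using coeff_eq_zero_of_natDegree_lt (p := G) (n := 3) (by omega)
  have hq₂ : 0 ≤ β + m * ν := by
    simpa [G] using coeff_nonneg_of_natDegree_le (k := 2) hGlead (by omega)
  have hq₂β : β = 0 → β + m * ν = 0 := fun hβ0 => by
    have := hFdeg hβ0
    simpa [G] using coeff_eq_zero_of_natDegree_lt (p := G) (n := 2) (by omega)
  have hq₁ : β = 0 → 0 ≤ γ + m * φ := fun hβ0 => by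
    have := hFdeg hβ0
    simpa [G] using coeff_nonneg_of_natDegree_le (k := 1) hGlead (by omega)
  have hroot : 0 ≤ β * γ * (γ + m * φ) - γ ^ 2 * (β + m * ν) - β ^ 2 * (m * ψ) := by
    have : β * γ * (γ + m * φ) - γ ^ 2 * (β + m * ν) - β ^ 2 * (m * ψ) =
        m * (β * γ * φ - γ ^ 2 * ν - β ^ 2 * ψ) := by ring
    rw [this]
    positivity
  have hFlin : Fpoly α β γ = C β * X + C γ := by simp [Fpoly, hα]
  rw [hFlin]
  refine hT.linear_mul_add_mul_derivative hβ hγ hq₂ hq₂β hq₁ hroot ?_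
  rw [← hFlin, ← Gpoly_eq_X_mul_Fpoly_add_C_mul_Gpoly, ← hG]
  simp [G, Gpoly, hG₃]

theorem stmt_1_general (α β γ μ ν φ ψ : ℕ → ℝ) (T : ℕ → Polynomial ℝ)
    (hrec : ∀ n, T (n + 1) =
      Fpoly (α n) (β n) (γ n) * T n
        + Gpoly (μ n) (ν n) (φ n) (ψ n) * derivative (T n))
    (n₀ : ℕ)
    (hFlead : ∀ n, n₀ ≤ n → 0 < (Fpoly (α n) (β n) (γ n)).leadingCoeff)
    (hGlead : ∀ n, n₀ ≤ n → 0 <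
      (Gpoly (α n + ((T n).natDegree : ℝ) * μ n) (β n + ((T n).natDegree : ℝ) * ν n)
        (γ n + ((T n).natDegree : ℝ) * φ n) (((T n).natDegree : ℝ) * ψ n)).leadingCoeff)
    (hdegGF : ∀ n, n₀ ≤ n →
      (Gpoly (α n + ((T n).natDegree : ℝ) * μ n) (β n + ((T n).natDegree : ℝ) * ν n)
        (γ n + ((T n).natDegree : ℝ) * φ n) (((T n).natDegree : ℝ) * ψ n)).natDegree ≤
      (Fpoly (α n) (β n) (γ n)).natDegree + 1)
    (hdegF : ∀ n, n₀ ≤ n → (Fpoly (α n) (β n) (γ n)).natDegree ≤ 1)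
    (hineq : ∀ n, n₀ ≤ n →
      0 ≤ β n * γ n * φ n - (γ n) ^ 2 * ν n - (β n) ^ 2 * ψ n)
    (hT0 : RealRooted (T n₀)) :
    ∀ n, n₀ ≤ n → RealRooted (T n) := by
  intro n hn
  induction n, hn using Nat.le_induction with
  | base => exact hT0
  | succ n hn ih =>
    rw [hrec n]
    exact ih.Fpoly_mul_add_Gpoly_mul_derivative (hFlead n hn) (hGlead n hn) (hdegGF n hn)
      (hdegF n hn) (hineq n hn)

theorem stmt_1 (α β γ μ ν φ ψ : ℕ → ℝ) (T : ℕ → Polynomial ℝ)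
    (hrec : ∀ n, T (n + 1) =
      Fpoly (α n) (β n) (γ n) * T n
        + Gpoly (μ n) (ν n) (φ n) (ψ n) * derivative (T n))
    (n₀ : ℕ)
    (hFlead : ∀ n, n₀ ≤ n → 0 < (Fpoly (α n) (β n) (γ n)).leadingCoeff)
    (hGlead : ∀ n, n₀ ≤ n → 0 <
      (Gpoly (α n + ((T n).natDegree : ℝ) * μ n) (β n + ((T n).natDegree : ℝ) * ν n)
        (γ n + ((T n).natDegree : ℝ) * φ n) (((T n).natDegree : ℝ) * ψ n)).leadingCoeff)
    (hdegFG : ∀ n, n₀ ≤ n → (Fpoly (α n) (β n) (γ n)).natDegree ≤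
      (Gpoly (α n + ((T n).natDegree : ℝ) * μ n) (β n + ((T n).natDegree : ℝ) * ν n)
        (γ n + ((T n).natDegree : ℝ) * φ n) (((T n).natDegree : ℝ) * ψ n)).natDegree)
    (hdegGF : ∀ n, n₀ ≤ n →
      (Gpoly (α n + ((T n).natDegree : ℝ) * μ n) (β n + ((T n).natDegree : ℝ) * ν n)
        (γ n + ((T n).natDegree : ℝ) * φ n) (((T n).natDegree : ℝ) * ψ n)).natDegree ≤
      (Fpoly (α n) (β n) (γ n)).natDegree + 1)
    (hdegF : ∀ n, n₀ ≤ n → (Fpoly (α n) (β n) (γ n)).natDegree ≤ 1)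
    (hineq : ∀ n, n₀ ≤ n →
      0 ≤ β n * γ n * φ n - (γ n) ^ 2 * ν n - (β n) ^ 2 * ψ n)
    (hT0 : RealRooted (T n₀)) :
    ∀ n, n₀ ≤ n → RealRooted (T n) :=
  stmt_1_general α β γ μ ν φ ψ T hrec n₀ hFlead hGlead hdegGF hdegF hineq hT0
end

section
/- Let T be a Hurwitz stable real polynomial of degree m, and let β, γ, ν, φ, ρ, η ∈ ℝ satisfy φ ≥ 0, ρ ≥ 0, (β + mν)·ν ≤ 0, and (βφ − γν)ρ + φη ≥ 0. Define T⁺(x) = (βx + γ)T(x) + (νx² + φx)T′(x). Then the linear combination (φ − νx)·ρ·T⁺(x) + (φηx + (φ − γ)φρ)·T(x) is Hurwitz stable. -/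
open Polynomial

/-!
At a point `z` with `0 < re z` where `T z ≠ 0`, put `L = T'(z) / T(z) = ∑ 1 / (z - r)`, the sum
over the complex roots `r` of `T`, all of which satisfy `re r ≤ 0`. Each `1 / (z - r)` has
positive real part, and each `z r / (z - r) = (r⁻¹ - z⁻¹)⁻¹` has negative real part unless `r = 0`;
summing, `re L ≥ 0` and `re (z² L - m z) ≤ 0`. After division by `z T(z)` the polynomial becomes
`c + ρφ² (L + z⁻¹) - ρν(β + mν) z - ρν² (z² L - m z)` with `c = (βφ - γν)ρ + φη`, and under the
hypotheses every term has nonnegative real part. A zero therefore forces each term to vanish,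
which (through the equality case, `T = a X^m`) makes the polynomial identically zero.
-/

/-- A real polynomial is Hurwitz stable if it is identically zero or it does not
vanish on the open right half-plane. -/
def HurwitzStable (f : Polynomial ℝ) : Prop :=
  f = 0 ∨ ∀ z : ℂ, 0 < z.re → aeval z f ≠ 0

namespace Complex

lemma re_inv_pos {w : ℂ} (hw : 0 < w.re) : 0 < w⁻¹.re := by
  rw [inv_re]
  exact div_pos hw (normSq_pos.2 fun h => by simp [h] at hw)

lemma re_inv_neg {w : ℂ} (hw : w.re < 0) : w⁻¹.re < 0 := by
  rw [inv_re]
  exact div_neg_of_neg_of_pos hw (normSq_pos.2 fun h => by simp [h] at hw)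

lemma re_inv_nonpos {w : ℂ} (hw : w.re ≤ 0) : w⁻¹.re ≤ 0 := by
  rw [inv_re]
  exact div_nonpos_of_nonpos_of_nonneg hw (normSq_nonneg w)

lemma re_multiset_sum (s : Multiset ℂ) : s.sum.re = (s.map re).sum :=
  map_multiset_sum reAddGroupHom s

variable {z r : ℂ}

lemma re_inv_sub_pos (hz : 0 < z.re) (hr : r.re ≤ 0) : 0 < (z - r)⁻¹.re :=
  re_inv_pos (by rw [sub_re]; linarith)

lemma re_mul_div_sub_neg (hz : 0 < z.re) (hr : r.re ≤ 0) (hr0 : r ≠ 0) :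
    (z * r / (z - r)).re < 0 := by
  have hz0 : z ≠ 0 := fun h => by simp [h] at hz
  have hzr : z - r ≠ 0 := sub_ne_zero.2 fun h => by rw [h] at hz; linarith
  have hinv : z * r / (z - r) = (r⁻¹ - z⁻¹)⁻¹ := by field_simp
  rw [hinv]
  exact re_inv_neg (by rw [sub_re]; linarith [re_inv_nonpos hr, re_inv_pos hz])

lemma re_mul_div_sub_nonpos (hz : 0 < z.re) (hr : r.re ≤ 0) : (z * r / (z - r)).re ≤ 0 := by
  rcases eq_or_ne r 0 with rfl | hr0
  · simp
  · exact (re_mul_div_sub_neg hz hr hr0).le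

end Complex

namespace Polynomial

noncomputable def logDerivAt (T : ℝ[X]) (z : ℂ) : ℂ := aeval z (derivative T) / aeval z T

lemma X_mul_derivative_eq_of_roots_eq_zero {K : Type*} [Field K] {p : K[X]} (hp : p.Splits)
    (h : ∀ r ∈ p.roots, r = 0) : X * derivative p = C (p.natDegree : K) * p := by
  obtain ⟨a, ha⟩ : ∃ a, p = C a * X ^ p.natDegree := by
    refine ⟨p.leadingCoeff, ?_⟩
    conv_lhs => rw [hp.eq_prod_roots,
      Multiset.eq_replicate.2 ⟨hp.natDegree_eq_card_roots.symm, h⟩]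
    simp
  generalize p.natDegree = n at ha ⊢
  subst ha
  rw [derivative_C_mul_X_pow]
  cases n with
  | zero => simp
  | succ k => simp only [map_mul, Nat.add_sub_cancel, pow_succ]; ring

lemma logDerivAt_eq_sum_roots {T : ℝ[X]} {z : ℂ} (hz : aeval z T ≠ 0) :
    T.logDerivAt z =
      ((T.map (algebraMap ℝ ℂ)).roots.map fun r => 1 / (z - r)).sum := by
  rw [aeval_def, ← eval_map] at hz
  rw [logDerivAt, aeval_def, aeval_def, ← eval_map, ← eval_map, ← derivative_map]
  exact (IsAlgClosed.splits _).eval_derivative_div_eval_of_ne_zero hz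

lemma sq_mul_logDerivAt_sub_eq_sum_roots {T : ℝ[X]} {z : ℂ} (hz : aeval z T ≠ 0) :
    z ^ 2 * T.logDerivAt z - T.natDegree * z =
      ((T.map (algebraMap ℝ ℂ)).roots.map fun r => z * r / (z - r)).sum := by
  set p := T.map (algebraMap ℝ ℂ)
  have hcard : p.roots.card = T.natDegree := by
    rw [← (IsAlgClosed.splits p).natDegree_eq_card_roots, natDegree_map]
  have hterm : ∀ r ∈ p.roots, z * r / (z - r) = z ^ 2 * (1 / (z - r)) - z := by
    intro r hr
    have hzr : z - r ≠ 0 := sub_ne_zero.2 fun h => by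
      rw [aeval_def, ← eval_map, h] at hz
      exact hz (isRoot_of_mem_roots hr)
    field_simp
    ring
  rw [Multiset.map_congr rfl hterm, Multiset.sum_map_sub, Multiset.sum_map_mul_left,
    Multiset.map_const', Multiset.sum_replicate, hcard, nsmul_eq_mul,
    logDerivAt_eq_sum_roots hz]

end Polynomial

namespace HurwitzStable

variable {T : ℝ[X]}

lemma aeval_ne_zero (hT : HurwitzStable T) (hT0 : T ≠ 0) {z : ℂ} (hz : 0 < z.re) :
    aeval z T ≠ 0 :=
  hT.resolve_left hT0 z hz

lemma re_nonpos_of_mem_roots (hT : HurwitzStable T) {r : ℂ}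
    (hr : r ∈ (T.map (algebraMap ℝ ℂ)).roots) : r.re ≤ 0 := by
  by_contra! h
  have hT0 : T ≠ 0 := by rintro rfl; simp at hr
  exact hT.aeval_ne_zero hT0 h (by rw [aeval_def, ← eval_map]; exact isRoot_of_mem_roots hr)

variable {z : ℂ}

lemma re_logDerivAt_nonneg (hT : HurwitzStable T) (hz : 0 < z.re)
    (hTz : aeval z T ≠ 0) : 0 ≤ (T.logDerivAt z).re := by
  rw [logDerivAt_eq_sum_roots hTz, Complex.re_multiset_sum, Multiset.map_map]
  refine Multiset.sum_nonneg fun x hx => ?_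
  obtain ⟨r, hr, rfl⟩ := Multiset.mem_map.1 hx
  simpa using (Complex.re_inv_sub_pos hz (hT.re_nonpos_of_mem_roots hr)).le

lemma re_sq_mul_logDerivAt_sub_nonpos (hT : HurwitzStable T) (hz : 0 < z.re)
    (hTz : aeval z T ≠ 0) :
    (z ^ 2 * T.logDerivAt z - T.natDegree * z).re ≤ 0 := by
  rw [sq_mul_logDerivAt_sub_eq_sum_roots hTz, Complex.re_multiset_sum, Multiset.map_map]
  simpa using Multiset.sum_map_le_sum_map _ (fun _ => 0)
    fun r hr => Complex.re_mul_div_sub_nonpos hz (hT.re_nonpos_of_mem_roots hr)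

lemma re_sq_mul_logDerivAt_sub_neg (hT : HurwitzStable T) (hz : 0 < z.re)
    (hTz : aeval z T ≠ 0) {r : ℂ} (hr : r ∈ (T.map (algebraMap ℝ ℂ)).roots) (hr0 : r ≠ 0) :
    (z ^ 2 * T.logDerivAt z - T.natDegree * z).re < 0 := by
  rw [sq_mul_logDerivAt_sub_eq_sum_roots hTz, Complex.re_multiset_sum, Multiset.map_map]
  simpa using Multiset.sum_lt_sum (g := fun _ => 0)
    (fun r hr => Complex.re_mul_div_sub_nonpos hz (hT.re_nonpos_of_mem_roots hr))
    ⟨r, hr, Complex.re_mul_div_sub_neg hz (hT.re_nonpos_of_mem_roots hr) hr0⟩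

lemma X_mul_derivative_eq_of_re_sq_mul_logDerivAt_sub_eq_zero
    (hT : HurwitzStable T) (hz : 0 < z.re) (hTz : aeval z T ≠ 0)
    (h : (z ^ 2 * T.logDerivAt z - T.natDegree * z).re = 0) :
    X * derivative T = C (T.natDegree : ℝ) * T := by
  have hroots : ∀ r ∈ (T.map (algebraMap ℝ ℂ)).roots, r = 0 := fun r hr =>
    by_contra fun hr0 => (hT.re_sq_mul_logDerivAt_sub_neg hz hTz hr hr0).ne h
  apply map_injective (algebraMap ℝ ℂ) (algebraMap ℝ ℂ).injective
  simpa [derivative_map] using X_mul_derivative_eq_of_roots_eq_zero (IsAlgClosed.splits _) hroots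

lemma nonneg_combination (hT : HurwitzStable T) {a b d e : ℝ} (ha : 0 ≤ a) (hb : 0 ≤ b)
    (hd : 0 ≤ d) (he : 0 ≤ e) :
    HurwitzStable (C a * X * T + C b * (X * derivative T + T) + C d * X ^ 2 * T
      + C e * X ^ 2 * (C (T.natDegree : ℝ) * T - X * derivative T)) := by
  rcases eq_or_ne T 0 with rfl | hT0
  · simp [HurwitzStable]
  refine or_iff_not_imp_right.2 fun h => ?_
  push Not at h
  obtain ⟨z, hz, hFz⟩ := h
  have hTz := hT.aeval_ne_zero hT0 hz
  have hz0 : z ≠ 0 := fun h => by simp [h] at hz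
  set L := T.logDerivAt z
  set Q := z ^ 2 * L - T.natDegree * z
  have key : (a : ℂ) + b * (L + z⁻¹) + d * z - e * Q = 0 := by
    have : aeval z T * z * ((a : ℂ) + b * (L + z⁻¹) + d * z - e * Q) = 0 := by
      rw [← hFz]
      simp only [Q, L, logDerivAt, map_natCast, map_add, map_mul, map_pow, aeval_sub, aeval_C,
        aeval_X, Complex.coe_algebraMap]
      field_simp
      ring
    simpa [hTz, hz0] using this
  have hre := congrArg Complex.re key
  simp only [Complex.add_re, Complex.sub_re, Complex.re_ofReal_mul, Complex.ofReal_re,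
    Complex.zero_re] at hre
  have hLz : 0 < L.re + z⁻¹.re :=
    add_pos_of_nonneg_of_pos (hT.re_logDerivAt_nonneg hz hTz) (Complex.re_inv_pos hz)
  have hQ : Q.re ≤ 0 := hT.re_sq_mul_logDerivAt_sub_nonpos hz hTz
  have hbL := mul_nonneg hb hLz.le
  have hdz := mul_nonneg hd hz.le
  have heQ := mul_nonpos_of_nonneg_of_nonpos he hQ
  obtain rfl : a = 0 := by linarith
  obtain rfl : b = 0 :=
    (mul_eq_zero.1 (by linarith : b * (L.re + z⁻¹.re) = 0)).resolve_right hLz.ne'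
  obtain rfl : d = 0 := (mul_eq_zero.1 (by linarith : d * z.re = 0)).resolve_right hz.ne'
  rcases mul_eq_zero.1 (by linarith : e * Q.re = 0) with rfl | hQ0
  · simp
  · simp [hT.X_mul_derivative_eq_of_re_sq_mul_logDerivAt_sub_eq_zero hz hTz hQ0]

end HurwitzStable

theorem stmt_5_general (T : Polynomial ℝ) (m : ℕ) (hm : T.natDegree = m)
    (hT : HurwitzStable T)
    (β γ ν φ ρ η : ℝ)
    (hρ : 0 ≤ ρ)
    (hβν : (β + (m : ℝ) * ν) * ν ≤ 0)
    (hcomb : 0 ≤ (β * φ - γ * ν) * ρ + φ * η) :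
    HurwitzStable ((C φ - C ν * X) * C ρ *
        ((C β * X + C γ) * T + (C ν * X ^ 2 + C φ * X) * derivative T)
      + (C (φ * η) * X + C ((φ - γ) * φ * ρ)) * T) := by
  subst hm
  have hdecomp : (C φ - C ν * X) * C ρ *
        ((C β * X + C γ) * T + (C ν * X ^ 2 + C φ * X) * derivative T)
      + (C (φ * η) * X + C ((φ - γ) * φ * ρ)) * T =
      C ((β * φ - γ * ν) * ρ + φ * η) * X * T + C (ρ * φ ^ 2) * (X * derivative T + T)
        + C (ρ * -((β + T.natDegree * ν) * ν)) * X ^ 2 * T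
        + C (ρ * ν ^ 2) * X ^ 2 * (C (T.natDegree : ℝ) * T - X * derivative T) := by
    simp only [map_add, map_sub, map_mul, map_neg, map_pow]
    ring
  rw [hdecomp]
  exact hT.nonneg_combination hcomb (by positivity) (mul_nonneg hρ (neg_nonneg.2 hβν))
    (by positivity)

theorem stmt_5 (T : Polynomial ℝ) (m : ℕ) (hm : T.natDegree = m)
    (hT : HurwitzStable T)
    (β γ ν φ ρ η : ℝ)
    (hφ : 0 ≤ φ) (hρ : 0 ≤ ρ)
    (hβν : (β + (m : ℝ) * ν) * ν ≤ 0)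
    (hcomb : 0 ≤ (β * φ - γ * ν) * ρ + φ * η) :
    HurwitzStable ((C φ - C ν * X) * C ρ *
        ((C β * X + C γ) * T + (C ν * X ^ 2 + C φ * X) * derivative T)
      + (C (φ * η) * X + C ((φ - γ) * φ * ρ)) * T) :=
  stmt_5_general T m hm hT β γ ν φ ρ η hρ hβν hcomb
end
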